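/- Let n ≥ 2 and 1 ≤ p < ∞. The Chebyshev radius of the Birkhoff polytope Ω_n with centers constrained to Ω_n, namely inf over D ∈ Ω_n of max_{D' ∈ Ω_n} ‖D − D'‖_{S_p}, equals (n − 1)^{1/p}; moreover J_n attains this infimum, and it is the unique doubly stochastic matrix D with max_{D' ∈ Ω_n} ‖D − D'‖_{S_p} = (n − 1)^{1/p}. -/

import Mathlib

/-!
For `D, D' ∈ Ω_n`, `D - D'` kills the all-ones vector, so it has a zero singular value, and Hölder
over the other `n - 1` singular values gives `‖D - D'‖_{S_1} ≤ (n - 1)^{1 - 1/p} ‖D - D'‖_{S_p}`.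

At `J_n`: `J_n - D' = (J_n - I) D'` is a projection times a contraction, so its singular values are
at most `1` and `‖J_n - D'‖_{S_p} ≤ (n - 1)^{1/p}`.

For any `D`: the `n` permutations `i ↦ σ i + k` cover every entry once, so their diagonal sums
`∑ i, D i (σ i + k)` add up to `n` and some permutation matrix `P` has `∑ i, D i (σ i) ≤ 1`. As
`-Pᵀ` is orthogonal, `n - 1 ≤ tr (-Pᵀ (D - P)) ≤ ‖D - P‖_{S_1}`, whence
`‖D - P‖_{S_p} ≥ (n - 1)^{1/p}`. If `D` attains the bound, every diagonal sum is `≥ 1`, hence `= 1`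
by the same covering; swapping two values of a permutation then gives
`D i j + D k l = D i l + D k j`, and averaging over `k, l` yields `D = J_n`.
-/

open Matrix BigOperators

/-- The matrix `J_n` with all entries equal to `1/n`. -/
noncomputable def matJ (n : ℕ) : Matrix (Fin n) (Fin n) ℝ :=
  Matrix.of fun _ _ => (n : ℝ)⁻¹

/-- The singular values of a real square matrix: the square roots of the
eigenvalues of `Aᴴ * A` (`Aᴴ = Aᵀ` over `ℝ`). -/
noncomputable def singularValues {n : ℕ} (A : Matrix (Fin n) (Fin n) ℝ) : Fin n → ℝ :=
  fun i => Real.sqrt ((Matrix.isHermitian_conjTranspose_mul_self A).eigenvalues i)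

/-- The Schatten `p`-norm of a real square matrix. -/
noncomputable def schattenNorm {n : ℕ} (p : ℝ) (A : Matrix (Fin n) (Fin n) ℝ) : ℝ :=
  (∑ i, singularValues A i ^ p) ^ (1 / p)

/-- The Frobenius norm of a real square matrix. -/
noncomputable def frobNorm {n : ℕ} (A : Matrix (Fin n) (Fin n) ℝ) : ℝ :=
  Real.sqrt (∑ i, ∑ j, (A i j) ^ 2)

/-- The minimal trace of a square matrix: the minimum over all permutations `σ`
of `∑ i, A i (σ i)`. -/
noncomputable def trMin {n : ℕ} (A : Matrix (Fin n) (Fin n) ℝ) : ℝ :=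
  ⨅ σ : Equiv.Perm (Fin n), ∑ i, A i (σ i)

/-- A matrix is a permutation matrix if it is the matrix of some permutation. -/
def IsPermMatrix {n : ℕ} (P : Matrix (Fin n) (Fin n) ℝ) : Prop :=
  ∃ σ : Equiv.Perm (Fin n), P = σ.permMatrix ℝ

open Finset

variable {n : ℕ}

noncomputable abbrev rightSingularVectors (A : Matrix (Fin n) (Fin n) ℝ) :
    OrthonormalBasis (Fin n) ℝ (EuclideanSpace ℝ (Fin n)) :=
  (isHermitian_conjTranspose_mul_self A).eigenvectorBasis

lemma trace_eq_sum_dotProduct_mulVec (M : Matrix (Fin n) (Fin n) ℝ)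
    (b : OrthonormalBasis (Fin n) ℝ (EuclideanSpace ℝ (Fin n))) :
    M.trace = ∑ j, b j ⬝ᵥ (M *ᵥ b j) := by
  rw [← Matrix.trace_toLin_eq M (PiLp.basisFun 2 ℝ (Fin n)), ← Matrix.toLpLin_eq_toLin,
    LinearMap.trace_eq_sum_inner _ b]
  refine sum_congr rfl fun j _ => ?_
  simp [EuclideanSpace.inner_eq_star_dotProduct, dotProduct_comm]

lemma OrthonormalBasis.dotProduct_self_eq_one
    (b : OrthonormalBasis (Fin n) ℝ (EuclideanSpace ℝ (Fin n))) (j : Fin n) :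
    b j ⬝ᵥ b j = 1 := by
  have h := real_inner_self_eq_norm_sq (b j)
  rw [b.orthonormal.1 j, EuclideanSpace.inner_eq_star_dotProduct] at h
  simpa using h

lemma dotProduct_mulVec_transpose_mul_self {R m k : Type*} [CommSemiring R] [Fintype m]
    [Fintype k] (A : Matrix m k R) (x : k → R) :
    x ⬝ᵥ ((Aᵀ * A) *ᵥ x) = (A *ᵥ x) ⬝ᵥ (A *ᵥ x) := by
  rw [← mulVec_mulVec, dotProduct_mulVec, vecMul_transpose]

lemma dotProduct_self_mulVec_of_transpose_mul_self_eq_one {R m k : Type*} [CommSemiring R]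
    [Fintype m] [Fintype k] [DecidableEq k] {U : Matrix m k R} (hU : Uᵀ * U = 1) (x : k → R) :
    (U *ᵥ x) ⬝ᵥ (U *ᵥ x) = x ⬝ᵥ x := by
  rw [← dotProduct_mulVec_transpose_mul_self, hU, one_mulVec]

lemma singularValues_nonneg (A : Matrix (Fin n) (Fin n) ℝ) (j : Fin n) :
    0 ≤ singularValues A j :=
  Real.sqrt_nonneg _

lemma singularValues_eq_sqrt (A : Matrix (Fin n) (Fin n) ℝ) (j : Fin n) :
    singularValues A j =
      √((A *ᵥ rightSingularVectors A j) ⬝ᵥ (A *ᵥ rightSingularVectors A j)) := by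
  rw [singularValues, IsHermitian.eigenvalues_eq, ← dotProduct_mulVec_transpose_mul_self]
  simp only [conjTranspose_eq_transpose_of_trivial, star_trivial, RCLike.re_to_real]
  rfl

lemma singularValues_le_of_forall_dotProduct_le {A : Matrix (Fin n) (Fin n) ℝ} {c : ℝ}
    (hc : 0 ≤ c) (h : ∀ x, (A *ᵥ x) ⬝ᵥ (A *ᵥ x) ≤ c ^ 2 * (x ⬝ᵥ x)) (j : Fin n) :
    singularValues A j ≤ c := by
  have hj := h (rightSingularVectors A j)
  rw [OrthonormalBasis.dotProduct_self_eq_one, mul_one] at hj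
  rw [singularValues_eq_sqrt]
  exact Real.sqrt_le_iff.2 ⟨hc, hj⟩

lemma exists_singularValues_eq_zero {A : Matrix (Fin n) (Fin n) ℝ} (hA : A.det = 0) :
    ∃ j, singularValues A j = 0 := by
  have hdet : (Aᴴ * A).det = 0 := by rw [det_mul, hA, mul_zero]
  rw [(isHermitian_conjTranspose_mul_self A).det_eq_prod_eigenvalues] at hdet
  obtain ⟨j, -, hj⟩ := prod_eq_zero_iff.1 hdet
  exact ⟨j, by simp_all [singularValues]⟩

lemma trace_mul_le_sum_singularValues (A : Matrix (Fin n) (Fin n) ℝ)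
    {U : Matrix (Fin n) (Fin n) ℝ} (hU : Uᵀ * U = 1) :
    (U * A).trace ≤ ∑ j, singularValues A j := by
  rw [trace_eq_sum_dotProduct_mulVec _ (rightSingularVectors A)]
  refine sum_le_sum fun j _ => ?_
  set v := rightSingularVectors A j
  calc v ⬝ᵥ ((U * A) *ᵥ v) ≤ √(v ⬝ᵥ v) * √((U *ᵥ (A *ᵥ v)) ⬝ᵥ (U *ᵥ (A *ᵥ v))) := by
        simpa [← mulVec_mulVec, dotProduct, sq] using
          Real.sum_mul_le_sqrt_mul_sqrt univ v (U *ᵥ (A *ᵥ v))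
    _ = singularValues A j := by
        rw [dotProduct_self_mulVec_of_transpose_mul_self_eq_one hU,
          OrthonormalBasis.dotProduct_self_eq_one, Real.sqrt_one, one_mul, singularValues_eq_sqrt]

lemma Finset.sum_le_card_rpow_mul_rpow_sum {ι : Type*} (s : Finset ι) {f : ι → ℝ} {p : ℝ}
    (hp : 1 ≤ p) (hf : ∀ i ∈ s, 0 ≤ f i) :
    ∑ i ∈ s, f i ≤ (#s : ℝ) ^ (1 - 1 / p) * (∑ i ∈ s, f i ^ p) ^ (1 / p) := by
  have hp0 : 0 < p := by linarith
  have hsum : 0 ≤ ∑ i ∈ s, f i := sum_nonneg hf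
  have hsump : 0 ≤ ∑ i ∈ s, f i ^ p := sum_nonneg fun i hi => Real.rpow_nonneg (hf i hi) p
  calc ∑ i ∈ s, f i = ((∑ i ∈ s, f i) ^ p) ^ (1 / p) := by
        rw [one_div, Real.rpow_rpow_inv hsum hp0.ne']
    _ ≤ ((#s : ℝ) ^ (p - 1) * ∑ i ∈ s, f i ^ p) ^ (1 / p) := by
        gcongr
        exact Real.rpow_sum_le_const_mul_sum_rpow_of_nonneg s hp hf
    _ = (#s : ℝ) ^ (1 - 1 / p) * (∑ i ∈ s, f i ^ p) ^ (1 / p) := by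
        rw [Real.mul_rpow (by positivity) hsump, ← Real.rpow_mul (by positivity)]
        congr 2
        field_simp

lemma card_univ_erase_eq_sub_one (j : Fin n) : (#(univ.erase j) : ℝ) = n - 1 := by
  rw [card_erase_of_mem (mem_univ j), card_univ, Fintype.card_fin,
    Nat.cast_sub (Nat.one_le_of_lt j.pos), Nat.cast_one]

lemma sum_singularValues_le_rpow_mul_schattenNorm {A : Matrix (Fin n) (Fin n) ℝ}
    (hA : A.det = 0) {p : ℝ} (hp : 1 ≤ p) :
    ∑ j, singularValues A j ≤ ((n : ℝ) - 1) ^ (1 - 1 / p) * schattenNorm p A := by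
  obtain ⟨j₀, hj₀⟩ := exists_singularValues_eq_zero hA
  have hnonneg := singularValues_nonneg A
  calc ∑ j, singularValues A j = ∑ j ∈ univ.erase j₀, singularValues A j := by
        rw [sum_erase _ hj₀]
    _ ≤ ((n : ℝ) - 1) ^ (1 - 1 / p) * (∑ j ∈ univ.erase j₀, singularValues A j ^ p) ^ (1 / p) := by
        rw [← card_univ_erase_eq_sub_one j₀]
        exact sum_le_card_rpow_mul_rpow_sum _ hp fun j _ => hnonneg j
    _ ≤ ((n : ℝ) - 1) ^ (1 - 1 / p) * schattenNorm p A := by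
        have hn : (1 : ℝ) ≤ n := by exact_mod_cast j₀.pos
        unfold schattenNorm
        gcongr
        · exact sum_nonneg fun j _ => Real.rpow_nonneg (hnonneg j) p
        · exact fun j _ _ => Real.rpow_nonneg (hnonneg j) p
        · exact subset_univ _

lemma schattenNorm_le_of_singularValues_le {A : Matrix (Fin n) (Fin n) ℝ} (hA : A.det = 0)
    {p : ℝ} (hp : 0 < p) {c : ℝ} (hc : 0 ≤ c) (h : ∀ j, singularValues A j ≤ c) :
    schattenNorm p A ≤ ((n : ℝ) - 1) ^ (1 / p) * c := by
  obtain ⟨j₀, hj₀⟩ := exists_singularValues_eq_zero hA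
  have hnonneg := singularValues_nonneg A
  have hsum : ∑ j, singularValues A j ^ p ≤ ((n : ℝ) - 1) * c ^ p := by
    rw [← sum_erase _ (by rw [hj₀, Real.zero_rpow hp.ne']), ← card_univ_erase_eq_sub_one j₀,
      ← nsmul_eq_mul, ← sum_const]
    exact sum_le_sum fun j _ => Real.rpow_le_rpow (hnonneg j) (h j) hp.le
  have hn : (1 : ℝ) ≤ n := by exact_mod_cast j₀.pos
  calc schattenNorm p A ≤ (((n : ℝ) - 1) * c ^ p) ^ (1 / p) := by
        unfold schattenNorm
        gcongr
        exact sum_nonneg fun j _ => Real.rpow_nonneg (hnonneg j) p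
    _ = ((n : ℝ) - 1) ^ (1 / p) * c := by
        rw [Real.mul_rpow (by linarith) (Real.rpow_nonneg hc p), one_div,
          Real.rpow_rpow_inv hc hp.ne']

section DoublyStochastic

variable {ι : Type*} [Fintype ι]

lemma dotProduct_sub_self_le (u v : ι → ℝ) :
    (u - v) ⬝ᵥ (u - v) ≤ 2 * (u ⬝ᵥ u) + 2 * (v ⬝ᵥ v) := by
  simp only [dotProduct, Pi.sub_apply, mul_sum, ← sum_add_distrib]
  exact sum_le_sum fun i _ => by nlinarith [sq_nonneg (u i + v i)]

variable [DecidableEq ι]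

lemma dotProduct_mulVec_self_le_of_mem_doublyStochastic {D : Matrix ι ι ℝ}
    (hD : D ∈ doublyStochastic ℝ ι) (x : ι → ℝ) : (D *ᵥ x) ⬝ᵥ (D *ᵥ x) ≤ x ⬝ᵥ x := by
  obtain ⟨hnonneg, hrow, hcol⟩ := mem_doublyStochastic_iff_sum.1 hD
  have hjensen : ∀ i, (D *ᵥ x) i * (D *ᵥ x) i ≤ ∑ j, D i j * x j ^ 2 := fun i => by
    have h := sum_sq_le_sum_mul_sum_of_sq_le_mul univ (r := fun j => D i j * x j)
      (fun j _ => hnonneg i j) (fun j _ => mul_nonneg (hnonneg i j) (sq_nonneg (x j)))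
      (fun j _ => le_of_eq (by ring))
    simpa [hrow i, mulVec, dotProduct, ← sq] using h
  calc (D *ᵥ x) ⬝ᵥ (D *ᵥ x) ≤ ∑ i, ∑ j, D i j * x j ^ 2 := sum_le_sum fun i _ => hjensen i
    _ = x ⬝ᵥ x := by
        rw [sum_comm]
        simp [← sum_mul, hcol, dotProduct, sq]

lemma det_sub_eq_zero_of_mem_doublyStochastic [Nonempty ι] {D D' : Matrix ι ι ℝ}
    (hD : D ∈ doublyStochastic ℝ ι) (hD' : D' ∈ doublyStochastic ℝ ι) : (D - D').det = 0 := by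
  rw [← exists_mulVec_eq_zero_iff]
  refine ⟨1, one_ne_zero, ?_⟩
  rw [sub_mulVec, mulVec_one_of_mem_doublyStochastic hD,
    mulVec_one_of_mem_doublyStochastic hD', sub_self]

lemma dotProduct_sub_mulVec_self_le_of_mem_doublyStochastic {D D' : Matrix ι ι ℝ}
    (hD : D ∈ doublyStochastic ℝ ι) (hD' : D' ∈ doublyStochastic ℝ ι) (x : ι → ℝ) :
    ((D - D') *ᵥ x) ⬝ᵥ ((D - D') *ᵥ x) ≤ 2 ^ 2 * (x ⬝ᵥ x) := by
  rw [sub_mulVec]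
  linarith [dotProduct_sub_self_le (D *ᵥ x) (D' *ᵥ x),
    dotProduct_mulVec_self_le_of_mem_doublyStochastic hD x,
    dotProduct_mulVec_self_le_of_mem_doublyStochastic hD' x]

end DoublyStochastic

lemma matJ_mul_of_mem_doublyStochastic {D : Matrix (Fin n) (Fin n) ℝ}
    (hD : D ∈ doublyStochastic ℝ (Fin n)) : matJ n * D = matJ n := by
  ext i j
  simp [matJ, mul_apply, ← mul_sum, sum_col_of_mem_doublyStochastic hD]

lemma matJ_mem_doublyStochastic [NeZero n] : matJ n ∈ doublyStochastic ℝ (Fin n) := by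
  rw [mem_doublyStochastic_iff_sum]
  refine ⟨fun i j => ?_, fun i => ?_, fun j => ?_⟩ <;> simp [matJ]

lemma dotProduct_mulVec_matJ_nonneg (x : Fin n → ℝ) : 0 ≤ x ⬝ᵥ (matJ n *ᵥ x) := by
  have h : x ⬝ᵥ (matJ n *ᵥ x) = (n : ℝ)⁻¹ * (∑ i, x i) ^ 2 := by
    simp only [dotProduct, mulVec, matJ, of_apply, ← mul_sum, ← sum_mul, sq]
    ring
  rw [h]
  positivity

lemma transpose_mul_self_matJ_sub_one [NeZero n] :
    (matJ n - 1)ᵀ * (matJ n - 1) = 1 - matJ n := by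
  have hJ : (matJ n)ᵀ = matJ n := by ext i j; simp [matJ]
  rw [transpose_sub, transpose_one, hJ, sub_mul, mul_sub, mul_sub,
    matJ_mul_of_mem_doublyStochastic matJ_mem_doublyStochastic, mul_one, one_mul, one_mul]
  abel

lemma dotProduct_matJ_sub_mulVec_self_le [NeZero n] {D : Matrix (Fin n) (Fin n) ℝ}
    (hD : D ∈ doublyStochastic ℝ (Fin n)) (x : Fin n → ℝ) :
    ((matJ n - D) *ᵥ x) ⬝ᵥ ((matJ n - D) *ᵥ x) ≤ 1 ^ 2 * (x ⬝ᵥ x) := by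
  have hfactor : matJ n - D = (matJ n - 1) * D := by
    rw [sub_mul, matJ_mul_of_mem_doublyStochastic hD, one_mul]
  set y := D *ᵥ x
  calc ((matJ n - D) *ᵥ x) ⬝ᵥ ((matJ n - D) *ᵥ x) = y ⬝ᵥ y - y ⬝ᵥ (matJ n *ᵥ y) := by
        rw [hfactor, ← mulVec_mulVec, ← dotProduct_mulVec_transpose_mul_self,
          transpose_mul_self_matJ_sub_one, sub_mulVec, one_mulVec, dotProduct_sub]
    _ ≤ y ⬝ᵥ y := sub_le_self _ (dotProduct_mulVec_matJ_nonneg y)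
    _ ≤ 1 ^ 2 * (x ⬝ᵥ x) := by
        rw [one_pow, one_mul]
        exact dotProduct_mulVec_self_le_of_mem_doublyStochastic hD x

lemma permMatrix_mul_transpose_self {ι : Type*} [Fintype ι] [DecidableEq ι]
    (σ : Equiv.Perm ι) : σ.permMatrix ℝ * (σ.permMatrix ℝ)ᵀ = 1 := by
  rw [transpose_permMatrix, ← Matrix.permMatrix_mul, inv_mul_cancel,
    Matrix.permMatrix_one]

lemma trace_transpose_permMatrix_mul {ι : Type*} [Fintype ι] [DecidableEq ι]
    (σ : Equiv.Perm ι) (M : Matrix ι ι ℝ) :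
    ((σ.permMatrix ℝ)ᵀ * M).trace = ∑ i, M i (σ i) := by
  rw [transpose_permMatrix, Equiv.Perm.permMatrix, PEquiv.toMatrix_toPEquiv_mul]
  simpa [trace] using (Equiv.sum_comp σ fun i => M (σ.symm i) i).symm

lemma sub_sum_le_sum_singularValues_sub_permMatrix (D : Matrix (Fin n) (Fin n) ℝ)
    (σ : Equiv.Perm (Fin n)) :
    (n : ℝ) - ∑ i, D i (σ i) ≤ ∑ j, singularValues (D - σ.permMatrix ℝ) j := by
  have htrace : ((-(σ.permMatrix ℝ)ᵀ) * (D - σ.permMatrix ℝ)).trace = n - ∑ i, D i (σ i) := by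
    rw [neg_mul, trace_neg, mul_sub, trace_sub, trace_transpose_permMatrix_mul,
      trace_transpose_permMatrix_mul]
    simp [Equiv.Perm.permMatrix, PEquiv.toMatrix_apply]
  rw [← htrace]
  apply trace_mul_le_sum_singularValues
  rw [transpose_neg, transpose_transpose, neg_mul_neg, permMatrix_mul_transpose_self]

lemma sum_sum_apply_add_eq [NeZero n] {D : Matrix (Fin n) (Fin n) ℝ}
    (hrow : ∀ i, ∑ j, D i j = 1) (σ : Equiv.Perm (Fin n)) :
    ∑ k, ∑ i, D i (σ i + k) = n := by
  rw [sum_comm]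
  calc ∑ i, ∑ k, D i (σ i + k) = ∑ i, ∑ j, D i j :=
        sum_congr rfl fun i _ => Equiv.sum_comp (Equiv.addLeft (σ i)) (D i)
    _ = n := by simp [hrow]

lemma exists_perm_sum_le_one [NeZero n] {D : Matrix (Fin n) (Fin n) ℝ}
    (hrow : ∀ i, ∑ j, D i j = 1) : ∃ σ : Equiv.Perm (Fin n), ∑ i, D i (σ i) ≤ 1 := by
  obtain ⟨k, -, hk⟩ := exists_le_of_sum_le univ_nonempty
    (f := fun k => ∑ i, D i (i + k)) (g := fun _ => 1)
    (by simpa using (sum_sum_apply_add_eq hrow 1).le)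
  exact ⟨Equiv.addRight k, by simpa using hk⟩

lemma perm_sum_eq_one_of_forall_one_le [NeZero n] {D : Matrix (Fin n) (Fin n) ℝ}
    (hrow : ∀ i, ∑ j, D i j = 1) (h : ∀ σ : Equiv.Perm (Fin n), 1 ≤ ∑ i, D i (σ i))
    (σ : Equiv.Perm (Fin n)) : ∑ i, D i (σ i) = 1 := by
  have hshifts := (sum_eq_sum_iff_of_le (s := univ) (f := fun _ => (1 : ℝ))
    fun k _ => h (σ.trans (Equiv.addRight k))).1 (by simp [sum_sum_apply_add_eq hrow σ])
  simpa using (hshifts 0 (mem_univ 0)).symm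

lemma Equiv.Perm.exists_apply_eq_and_apply_eq {α : Type*} [DecidableEq α] {i k j l : α}
    (hik : i ≠ k) (hjl : j ≠ l) : ∃ σ : Equiv.Perm α, σ i = j ∧ σ k = l := by
  refine ⟨(Equiv.swap i j).trans (Equiv.swap (Equiv.swap i j k) l), ?_, by simp⟩
  have hjk : j ≠ Equiv.swap i j k := by
    rw [Ne, eq_comm, Equiv.swap_apply_eq_iff, Equiv.swap_apply_right]
    exact hik.symm
  simp [Equiv.swap_apply_of_ne_of_ne hjk hjl]

lemma add_eq_add_of_forall_perm_sum_eq {ι : Type*} [Fintype ι] [DecidableEq ι]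
    {D : Matrix ι ι ℝ} {c : ℝ} (h : ∀ σ : Equiv.Perm ι, ∑ x, D x (σ x) = c) (i k j l : ι) :
    D i j + D k l = D i l + D k j := by
  rcases eq_or_ne i k with rfl | hik
  · ring
  rcases eq_or_ne j l with rfl | hjl
  · ring
  obtain ⟨σ, hσi, hσk⟩ := Equiv.Perm.exists_apply_eq_and_apply_eq hik hjl
  have hdiff : ∑ x, (D x ((σ.trans (Equiv.swap j l)) x) - D x (σ x)) =
      (D i l - D i j) + (D k j - D k l) := by
    rw [Fintype.sum_eq_add i k hik]
    · simp [hσi, hσk]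
    · rintro x ⟨hxi, hxk⟩
      have hj : σ x ≠ j := hσi ▸ σ.injective.ne hxi
      have hl : σ x ≠ l := hσk ▸ σ.injective.ne hxk
      simp [Equiv.swap_apply_of_ne_of_ne hj hl]
  rw [sum_sub_distrib, h, h, sub_self] at hdiff
  linarith

lemma eq_matJ_of_add_eq_add {D : Matrix (Fin n) (Fin n) ℝ} (hrow : ∀ i, ∑ j, D i j = 1)
    (hcol : ∀ j, ∑ i, D i j = 1) (h : ∀ i k j l, D i j + D k l = D i l + D k j) :
    D = matJ n := by
  ext i j
  have hn : (n : ℝ) ≠ 0 := by exact_mod_cast (Fin.pos i).ne'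
  have hsum : ∑ k, ∑ l, (D i j + D k l) = ∑ k, ∑ l, (D i l + D k j) :=
    sum_congr rfl fun k _ => sum_congr rfl fun l _ => h i k j l
  simp only [sum_add_distrib, sum_const, card_univ, Fintype.card_fin, nsmul_eq_mul, hrow,
    ← mul_sum, hcol, mul_one] at hsum
  have hnD : (n : ℝ) * (n * D i j - 1) = 0 := by linear_combination hsum
  refine eq_inv_of_mul_eq_one_left ?_
  linarith [(mul_eq_zero.1 hnD).resolve_left hn]

lemma sub_sum_le_rpow_mul_schattenNorm [NeZero n] {p : ℝ} (hp : 1 ≤ p)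
    {D : Matrix (Fin n) (Fin n) ℝ} (hD : D ∈ doublyStochastic ℝ (Fin n))
    (σ : Equiv.Perm (Fin n)) :
    (n : ℝ) - ∑ i, D i (σ i) ≤
      ((n : ℝ) - 1) ^ (1 - 1 / p) * schattenNorm p (D - σ.permMatrix ℝ) :=
  (sub_sum_le_sum_singularValues_sub_permMatrix D σ).trans <|
    sum_singularValues_le_rpow_mul_schattenNorm
      (det_sub_eq_zero_of_mem_doublyStochastic hD permMatrix_mem_doublyStochastic) hp

lemma rpow_one_sub_mul_rpow {x : ℝ} (hx : 0 < x) (p : ℝ) :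
    x ^ (1 - 1 / p) * x ^ (1 / p) = x := by
  rw [← Real.rpow_add hx, sub_add_cancel, Real.rpow_one]

section MaxSchattenDist

noncomputable def maxSchattenDist (p : ℝ) (D : Matrix (Fin n) (Fin n) ℝ) : ℝ :=
  sSup {r : ℝ | ∃ D' ∈ doublyStochastic ℝ (Fin n), r = schattenNorm p (D - D')}

variable {p : ℝ} {D : Matrix (Fin n) (Fin n) ℝ}

lemma schattenNorm_sub_le_maxSchattenDist [NeZero n] (hp : 0 < p)
    (hD : D ∈ doublyStochastic ℝ (Fin n)) {D' : Matrix (Fin n) (Fin n) ℝ}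
    (hD' : D' ∈ doublyStochastic ℝ (Fin n)) :
    schattenNorm p (D - D') ≤ maxSchattenDist p D := by
  refine le_csSup ⟨((n : ℝ) - 1) ^ (1 / p) * 2, ?_⟩ ⟨D', hD', rfl⟩
  rintro _ ⟨D'', hD'', rfl⟩
  exact schattenNorm_le_of_singularValues_le (det_sub_eq_zero_of_mem_doublyStochastic hD hD'')
    hp zero_le_two <| singularValues_le_of_forall_dotProduct_le zero_le_two <|
      dotProduct_sub_mulVec_self_le_of_mem_doublyStochastic hD hD''

lemma maxSchattenDist_le {c : ℝ}
    (h : ∀ D' ∈ doublyStochastic ℝ (Fin n), schattenNorm p (D - D') ≤ c) :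
    maxSchattenDist p D ≤ c :=
  csSup_le ⟨_, 1, one_mem _, rfl⟩ fun _ ⟨D', hD', hr⟩ => hr ▸ h D' hD'

lemma rpow_le_maxSchattenDist (hn : 2 ≤ n) (hp : 1 ≤ p) (hD : D ∈ doublyStochastic ℝ (Fin n)) :
    ((n : ℝ) - 1) ^ (1 / p) ≤ maxSchattenDist p D := by
  have : NeZero n := ⟨by omega⟩
  have hb : (0 : ℝ) < n - 1 := sub_pos.2 (Nat.one_lt_cast.2 hn)
  obtain ⟨σ, hσ⟩ := exists_perm_sum_le_one fun i => sum_row_of_mem_doublyStochastic hD i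
  have hσ' : ((n : ℝ) - 1) ^ (1 - 1 / p) * ((n : ℝ) - 1) ^ (1 / p) ≤
      ((n : ℝ) - 1) ^ (1 - 1 / p) * schattenNorm p (D - σ.permMatrix ℝ) := by
    rw [rpow_one_sub_mul_rpow hb]
    linarith [sub_sum_le_rpow_mul_schattenNorm hp hD σ]
  exact (le_of_mul_le_mul_left hσ' (Real.rpow_pos_of_pos hb _)).trans <|
    schattenNorm_sub_le_maxSchattenDist (by linarith) hD permMatrix_mem_doublyStochastic

lemma maxSchattenDist_matJ (hn : 2 ≤ n) (hp : 1 ≤ p) :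
    maxSchattenDist p (matJ n) = ((n : ℝ) - 1) ^ (1 / p) := by
  have : NeZero n := ⟨by omega⟩
  refine le_antisymm (maxSchattenDist_le fun D' hD' => ?_)
    (rpow_le_maxSchattenDist hn hp matJ_mem_doublyStochastic)
  simpa using schattenNorm_le_of_singularValues_le
    (det_sub_eq_zero_of_mem_doublyStochastic matJ_mem_doublyStochastic hD') (by linarith)
    zero_le_one <| singularValues_le_of_forall_dotProduct_le zero_le_one <|
      dotProduct_matJ_sub_mulVec_self_le hD'

lemma eq_matJ_of_maxSchattenDist_le (hn : 2 ≤ n) (hp : 1 ≤ p)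
    (hD : D ∈ doublyStochastic ℝ (Fin n)) (h : maxSchattenDist p D ≤ ((n : ℝ) - 1) ^ (1 / p)) :
    D = matJ n := by
  have : NeZero n := ⟨by omega⟩
  have hb : (0 : ℝ) < n - 1 := sub_pos.2 (Nat.one_lt_cast.2 hn)
  have hrow := sum_row_of_mem_doublyStochastic hD
  refine eq_matJ_of_add_eq_add hrow (sum_col_of_mem_doublyStochastic hD) <|
    add_eq_add_of_forall_perm_sum_eq <| perm_sum_eq_one_of_forall_one_le hrow fun σ => ?_
  have hσ : ((n : ℝ) - 1) ^ (1 - 1 / p) * schattenNorm p (D - σ.permMatrix ℝ) ≤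
      ((n : ℝ) - 1) ^ (1 - 1 / p) * ((n : ℝ) - 1) ^ (1 / p) :=
    mul_le_mul_of_nonneg_left ((schattenNorm_sub_le_maxSchattenDist (by linarith) hD
      permMatrix_mem_doublyStochastic).trans h) (Real.rpow_nonneg hb.le _)
  rw [rpow_one_sub_mul_rpow hb] at hσ
  linarith [sub_sum_le_rpow_mul_schattenNorm hp hD σ]

end MaxSchattenDist

/-- For `n ≥ 2` and `1 ≤ p < ∞`, the Chebyshev radius of `Ω_n` with
centers constrained to `Ω_n` equals `(n − 1)^{1/p}`; `J_n` attains it and is the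
unique doubly stochastic matrix doing so. -/
theorem chebyshev_center_constrained_schatten {n : ℕ} (hn : 2 ≤ n) {p : ℝ} (hp : 1 ≤ p) :
    (⨅ D : {M : Matrix (Fin n) (Fin n) ℝ // M ∈ doublyStochastic ℝ (Fin n)},
        sSup {r : ℝ | ∃ D' ∈ doublyStochastic ℝ (Fin n), r = schattenNorm p (D.1 - D')}) =
        ((n : ℝ) - 1) ^ (1 / p) ∧
      sSup {r : ℝ | ∃ D' ∈ doublyStochastic ℝ (Fin n), r = schattenNorm p (matJ n - D')} =
        ((n : ℝ) - 1) ^ (1 / p) ∧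
      ∀ D ∈ doublyStochastic ℝ (Fin n),
        sSup {r : ℝ | ∃ D' ∈ doublyStochastic ℝ (Fin n), r = schattenNorm p (D - D')} =
          ((n : ℝ) - 1) ^ (1 / p) → D = matJ n := by
  have : NeZero n := ⟨by omega⟩
  have hJ := maxSchattenDist_matJ hn hp
  refine ⟨?_, hJ, fun D hD h => eq_matJ_of_maxSchattenDist_le hn hp hD h.le⟩
  have : Nonempty {M : Matrix (Fin n) (Fin n) ℝ // M ∈ doublyStochastic ℝ (Fin n)} :=
    ⟨⟨1, one_mem _⟩⟩
  refine IsGLB.ciInf_eq (IsLeast.isGLB ⟨⟨⟨matJ n, matJ_mem_doublyStochastic⟩, hJ⟩, ?_⟩)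
  rintro _ ⟨D, rfl⟩
  exact rpow_le_maxSchattenDist hn hp D.2
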